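/- Let A = ⟨Q, Σ⟩ be a DFA with |Q| = n, and let P ⊆ Q be a subset with |P| = k > 1. If there exists a word v ∈ Σ* with |P·v| < |P|, then there exists such a word of length at most C(n−k+2, 2), where C(·,·) denotes the binomial coefficient. -/
import Mathlib

open Finset

/-- The action of a word (list of letters) on a state, applying letters left to right. -/
def act {Q A : Type*} (δ : Q → A → Q) (q : Q) (w : List A) : Q := w.foldl δ q

/-- The image of a set of states under the action of a word. -/
def img {Q A : Type*} [DecidableEq Q] (δ : Q → A → Q) (P : Finset Q) (w : List A) : Finset Q :=
  P.image (fun q => act δ q w)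

/-- `excl δ w = Q \ Q·w`. -/
def excl {Q A : Type*} [Fintype Q] [DecidableEq Q] (δ : Q → A → Q) (w : List A) : Finset Q :=
  Finset.univ \ img δ Finset.univ w

/-- `dupl δ w` : the set of states with at least two preimages under the action of `w`. -/
def dupl {Q A : Type*} [Fintype Q] [DecidableEq Q] (δ : Q → A → Q) (w : List A) : Finset Q :=
  Finset.univ.filter (fun p => ∃ q₁ q₂ : Q, q₁ ≠ q₂ ∧ act δ q₁ w = p ∧ act δ q₂ w = p)

/-- A DFA is completely reachable if every nonempty subset of states is the image of the
full state set under the action of some word. -/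
def CompletelyReachable {Q A : Type*} [Fintype Q] [DecidableEq Q] (δ : Q → A → Q) : Prop :=
  ∀ P : Finset Q, P.Nonempty → ∃ w : List A, img δ Finset.univ w = P

lemma act_append' {Q A : Type*} (δ : Q → A → Q) (q : Q) (u w : List A) :
    act δ q (u ++ w) = act δ (act δ q u) w := List.foldl_append ..

lemma img_append' {Q A : Type*} [DecidableEq Q] (δ : Q → A → Q) (P : Finset Q) (u w : List A) :
    img δ P (u ++ w) = img δ (img δ P u) w := by
  simp only [img, Finset.image_image]
  exact Finset.image_congr fun q _ => act_append' δ q u w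

lemma img_card_lt_of_merge {Q A : Type*} [DecidableEq Q] {δ : Q → A → Q} {s : Finset Q}
    {w : List A} {x y : Q} (hx : x ∈ s) (hy : y ∈ s) (hne : x ≠ y)
    (hf : act δ x w = act δ y w) :
    (img δ s w).card < s.card := by
  have himg : s.image (fun q => act δ q w) = (s.erase x).image (fun q => act δ q w) := by
    apply Finset.Subset.antisymm
    · intro z hz
      obtain ⟨a, ha, rfl⟩ := Finset.mem_image.1 hz
      by_cases hax : a = x
      · subst hax
        exact Finset.mem_image.2 ⟨y, Finset.mem_erase.2 ⟨hne.symm, hy⟩, hf.symm⟩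
      · exact Finset.mem_image.2 ⟨a, Finset.mem_erase.2 ⟨hax, ha⟩, rfl⟩
    · exact Finset.image_subset_image (Finset.erase_subset x s)
  calc (img δ s w).card = ((s.erase x).image (fun q => act δ q w)).card := by
        rw [img, himg]
    _ ≤ (s.erase x).card := Finset.card_image_le
    _ < s.card := Finset.card_erase_lt_of_mem hx

lemma square_to_triangle (N : ℕ) (g : ℕ → ℕ → ℝ) :
    ∑ z ∈ Finset.range N ×ˢ Finset.range N, g z.1 z.2
    = ∑ z ∈ (Finset.range N ×ˢ Finset.range N).filter (fun z => z.1 ≤ z.2),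
        (if z.1 = z.2 then g z.1 z.2 else g z.1 z.2 + g z.2 z.1) := by
  rw [← Finset.sum_filter_add_sum_filter_not (Finset.range N ×ˢ Finset.range N)
      (fun z => z.1 ≤ z.2) (fun z => g z.1 z.2)]
  have h1 : ∀ z ∈ (Finset.range N ×ˢ Finset.range N).filter (fun z => z.1 ≤ z.2),
      (if z.1 = z.2 then g z.1 z.2 else g z.1 z.2 + g z.2 z.1)
      = g z.1 z.2 + (if ¬ z.1 = z.2 then g z.2 z.1 else 0) := by
    intro z _; split_ifs with h <;> simp_all
  rw [Finset.sum_congr rfl h1, Finset.sum_add_distrib]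
  congr 1
  rw [← Finset.sum_filter, Finset.filter_filter]
  have h2 : (Finset.range N ×ˢ Finset.range N).filter (fun z => z.1 ≤ z.2 ∧ ¬ z.1 = z.2)
      = (Finset.range N ×ˢ Finset.range N).filter (fun z => z.1 < z.2) := by
    ext z
    simp only [Finset.mem_filter, Finset.mem_product, Finset.mem_range]
    omega
  rw [h2]
  refine Finset.sum_nbij' Prod.swap Prod.swap ?_ ?_ ?_ ?_ ?_
  · intro a ha
    simp only [Finset.mem_filter, Finset.mem_product, Finset.mem_range, Prod.fst_swap,
      Prod.snd_swap] at *
    omega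
  · intro a ha
    simp only [Finset.mem_filter, Finset.mem_product, Finset.mem_range, Prod.fst_swap,
      Prod.snd_swap] at *
    omega
  · intro a _; exact Prod.swap_swap a
  · intro a _; exact Prod.swap_swap a
  · intro a _; rfl


lemma triangle_card (N : ℕ) :
    ((Finset.range N ×ˢ Finset.range N).filter (fun z => z.1 ≤ z.2)).card
      = (N + 1).choose 2 := by
  rw [Finset.card_eq_sum_card_fiberwise
    (f := fun z : ℕ × ℕ => z.2) (t := Finset.range N)
    (fun z hz => (Finset.mem_product.1 (Finset.mem_filter.1 hz).1).2)]
  have h1 : ∀ q ∈ Finset.range N,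
      (((Finset.range N ×ˢ Finset.range N).filter (fun z => z.1 ≤ z.2)).filter
        (fun z => z.2 = q)).card = q + 1 := by
    intro q hq
    rw [Finset.mem_range] at hq
    have : ((Finset.range N ×ˢ Finset.range N).filter (fun z => z.1 ≤ z.2)).filter
        (fun z => z.2 = q) = (Finset.range (q+1)).image (fun p => (p, q)) := by
      ext ⟨a, b⟩
      simp only [Finset.mem_filter, Finset.mem_product, Finset.mem_range, Finset.mem_image,
        Finset.filter_filter, Prod.ext_iff]
      constructor
      · rintro ⟨⟨h1, h2⟩, h3, rfl⟩; exact ⟨a, by omega, rfl, rfl⟩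
      · rintro ⟨p, hp, rfl, rfl⟩; omega
    rw [this, Finset.card_image_of_injective _ (fun a b h => (Prod.ext_iff.1 h).1),
      Finset.card_range]
  rw [Finset.sum_congr rfl h1]
  have h2 : ∑ q ∈ Finset.range N, (q + 1) = ∑ q ∈ Finset.range (N + 1), q := by
    rw [Finset.sum_range_succ' (fun q => q) N]
    simp
  have h3 := Finset.sum_range_id_mul_two (N + 1)
  rw [h2, Nat.choose_two_right]
  omega


open Polynomial in
lemma frankl_pairs {Q : Type*} [Fintype Q] [DecidableEq Q] {m k : ℕ}
    (S : ℕ → Finset Q) (x y : ℕ → Q)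
    (hcard : ∀ i, i < m → (S i).card = k)
    (hx : ∀ i, i < m → x i ∈ S i) (hy : ∀ i, i < m → y i ∈ S i)
    (hcut : ∀ i j, i < j → j < m → x j ∉ S i ∨ y j ∉ S i) :
    m ≤ (Fintype.card Q - k + 2).choose 2 := by
  classical
  set b := Fintype.card Q - k with hb
  set N := b + 1 with hN
  set r : Q → ℝ := fun q => ((Fintype.equivFin Q q : ℕ) : ℝ) with hrdef
  have hr : Function.Injective r := by
    intro a c h
    have h2 : ((Fintype.equivFin Q a : ℕ) : ℝ) = ((Fintype.equivFin Q c : ℕ) : ℝ) := h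
    exact (Fintype.equivFin Q).injective (Fin.val_injective (Nat.cast_injective h2))
  set f : ℕ → ℝ[X] := fun i => ∏ q ∈ Finset.univ \ S i, (X - C (r q)) with hfdef
  have hdeg : ∀ i, i < m → (f i).natDegree = b := by
    intro i hi
    rw [hfdef]
    simp only
    rw [Polynomial.natDegree_prod _ _ (fun q _ => X_sub_C_ne_zero (r q))]
    simp only [natDegree_X_sub_C]
    rw [Finset.sum_const, smul_eq_mul, mul_one, Finset.card_sdiff_of_subset (Finset.subset_univ _),
      Finset.card_univ, hcard i hi]
  have heval0 : ∀ i q0, q0 ∉ S i → (f i).eval (r q0) = 0 := by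
    intro i q0 hq0
    rw [hfdef]
    simp only [eval_prod, eval_sub, eval_X, eval_C]
    exact Finset.prod_eq_zero (Finset.mem_sdiff.2 ⟨Finset.mem_univ _, hq0⟩) (sub_self _)
  have hevalne : ∀ i q0, q0 ∈ S i → (f i).eval (r q0) ≠ 0 := by
    intro i q0 hq0
    rw [hfdef]
    simp only [eval_prod, eval_sub, eval_X, eval_C]
    rw [Finset.prod_ne_zero_iff]
    intro q hq
    have hne : q0 ≠ q := fun h => (Finset.mem_sdiff.1 hq).2 (h ▸ hq0)
    exact sub_ne_zero.2 fun h => hne (hr h)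
  set T : Finset (ℕ × ℕ) := (Finset.range N ×ˢ Finset.range N).filter (fun z => z.1 ≤ z.2)
    with hT
  set u : ℕ → ({z // z ∈ T} → ℝ) :=
    fun i z => (f i).coeff z.1.1 * (f i).coeff z.1.2 with hu
  have hEval : ∀ i, i < m → ∀ s t : ℝ,
      (∑ z : {z // z ∈ T}, u i z * (if z.1.1 = z.1.2 then s ^ z.1.1 * t ^ z.1.2
        else s ^ z.1.1 * t ^ z.1.2 + s ^ z.1.2 * t ^ z.1.1))
      = (f i).eval s * (f i).eval t := by
    intro i hi s t
    have h1 := Finset.sum_coe_sort T (fun z : ℕ × ℕ => (f i).coeff z.1 * (f i).coeff z.2 *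
      (if z.1 = z.2 then s ^ z.1 * t ^ z.2 else s ^ z.1 * t ^ z.2 + s ^ z.2 * t ^ z.1))
    rw [hu]
    simp only
    rw [h1]
    have h2 : ∀ z ∈ T, (f i).coeff z.1 * (f i).coeff z.2 *
        (if z.1 = z.2 then s ^ z.1 * t ^ z.2 else s ^ z.1 * t ^ z.2 + s ^ z.2 * t ^ z.1)
        = (if z.1 = z.2 then ((f i).coeff z.1 * s ^ z.1) * ((f i).coeff z.2 * t ^ z.2)
           else ((f i).coeff z.1 * s ^ z.1) * ((f i).coeff z.2 * t ^ z.2)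
             + ((f i).coeff z.2 * s ^ z.2) * ((f i).coeff z.1 * t ^ z.1)) := by
      intro z _
      split_ifs with h
      · ring
      · ring
    rw [Finset.sum_congr rfl h2, hT,
      ← square_to_triangle N (fun p q => ((f i).coeff p * s ^ p) * ((f i).coeff q * t ^ q))]
    rw [Finset.sum_product]
    dsimp only
    rw [← Finset.sum_mul_sum]
    have hds : (f i).natDegree < N := by rw [hdeg i hi]; omega
    rw [Polynomial.eval_eq_sum_range' hds s, Polynomial.eval_eq_sum_range' hds t]
  have hM0 : ∀ i j, i < j → j < m → (f i).eval (r (x j)) * (f i).eval (r (y j)) = 0 := by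
    intro i j hij hj
    rcases hcut i j hij hj with h | h
    · rw [heval0 i _ h, zero_mul]
    · rw [heval0 i _ h, mul_zero]
  have hMd : ∀ j, j < m → (f j).eval (r (x j)) * (f j).eval (r (y j)) ≠ 0 := fun j hj =>
    mul_ne_zero (hevalne j _ (hx j hj)) (hevalne j _ (hy j hj))
  have hLI : LinearIndependent ℝ (fun i : Fin m => u i) := by
    rw [Fintype.linearIndependent_iff]
    intro g hg
    by_contra hcon
    push_neg at hcon
    obtain ⟨i0, hi0⟩ := hcon
    set F := Finset.univ.filter (fun i : Fin m => g i ≠ 0) with hF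
    have hFne : F.Nonempty := ⟨i0, by simp [hF, hi0]⟩
    set j := F.max' hFne with hj
    have hgj : g j ≠ 0 := (Finset.mem_filter.1 (F.max'_mem hFne)).2
    have hmax : ∀ i : Fin m, g i ≠ 0 → i ≤ j := fun i h => F.le_max' i (by simp [hF, h])
    set s := r (x (j : ℕ)) with hs
    set t := r (y (j : ℕ)) with ht
    set mv : ℕ × ℕ → ℝ := fun z => if z.1 = z.2 then s ^ z.1 * t ^ z.2
      else s ^ z.1 * t ^ z.2 + s ^ z.2 * t ^ z.1 with hmv
    have hzero : ∑ i : Fin m, g i * ((f (i : ℕ)).eval s * (f (i : ℕ)).eval t) = 0 := by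
      have step : ∀ i : Fin m, g i * ((f (i : ℕ)).eval s * (f (i : ℕ)).eval t)
          = ∑ z : {z // z ∈ T}, g i * (u (i : ℕ) z * mv z.1) := by
        intro i
        rw [← hEval (i : ℕ) i.isLt s t, Finset.mul_sum]
      rw [Finset.sum_congr rfl (fun i _ => step i), Finset.sum_comm]
      have swap2 : ∀ z : {z // z ∈ T}, ∑ i : Fin m, g i * (u (i : ℕ) z * mv z.1)
          = ((∑ i : Fin m, g i • u (i : ℕ)) z) * mv z.1 := by
        intro z
        rw [Finset.sum_apply, Finset.sum_mul]
        exact Finset.sum_congr rfl fun i _ => by simp [smul_eq_mul]; ring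
      rw [Finset.sum_congr rfl fun z _ => swap2 z, hg]
      simp
    rw [Finset.sum_eq_single j (fun i _ hne => ?_) (by simp)] at hzero
    · exact hMd (j : ℕ) j.isLt (by
        rcases mul_eq_zero.1 hzero with h | h
        · exact absurd h hgj
        · exact h)
    · rcases lt_or_gt_of_ne hne with hlt | hgt
      · rw [hM0 (i : ℕ) (j : ℕ) hlt (j.isLt), mul_zero]
      · rw [of_not_not fun h => absurd (hmax i h) (not_le.2 hgt), zero_mul]
  have hfin := hLI.fintype_card_le_finrank
  rw [Module.finrank_pi ℝ] at hfin
  rw [Fintype.card_fin, Fintype.card_coe, triangle_card N] at hfin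
  calc m ≤ (N + 1).choose 2 := hfin
    _ = (Fintype.card Q - k + 2).choose 2 := by rw [hN, hb]

/-- If some word compresses a k-element subset P (k > 1), then some word of length at most
C(n−k+2, 2) does. -/
theorem compressing_word_length {Q A : Type*} [Fintype Q] [DecidableEq Q]
    (δ : Q → A → Q) (P : Finset Q) (k : ℕ) (hk : P.card = k) (hk1 : 1 < k)
    (h : ∃ v : List A, (img δ P v).card < P.card) :
    ∃ v : List A, (img δ P v).card < P.card ∧
      v.length ≤ (Fintype.card Q - k + 2).choose 2 := by
  classical
  obtain ⟨v0, hv0⟩ := h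
  set Sset : Set ℕ := {l | ∃ v : List A, v.length = l ∧ (img δ P v).card < P.card} with hSset
  have hSne : Sset.Nonempty := ⟨v0.length, v0, rfl, hv0⟩
  set m := sInf Sset with hm
  have hmem : m ∈ Sset := Nat.sInf_mem hSne
  simp only [hSset, Set.mem_setOf_eq] at hmem
  obtain ⟨v, hvlen, hvcomp⟩ := hmem
  have hmin : ∀ w : List A, w.length < m → ¬ (img δ P w).card < P.card := by
    intro w hw hcomp
    have hwmem : w.length ∈ Sset := by
      rw [hSset]
      exact ⟨w, rfl, hcomp⟩
    exact absurd (Nat.sInf_le hwmem) (Nat.not_le.2 hw)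
  refine ⟨v, hvcomp, ?_⟩
  rw [hvlen]
  by_contra hN
  push_neg at hN
  set Pi : ℕ → Finset Q := fun i => img δ P (v.take i) with hPidef
  have hPi : ∀ i, i < m → (Pi i).card = P.card := by
    intro i hi
    have hlen : (v.take i).length < m := by
      rw [List.length_take]
      omega
    have h1 : ¬ (Pi i).card < P.card := hmin _ hlen
    have hle : (Pi i).card ≤ P.card := Finset.card_image_le
    omega
  have hQne : P.Nonempty := Finset.card_pos.1 (by omega)
  obtain ⟨q0, _⟩ := hQne
  have hkey : ∀ i, ∃ x y : Q, i < m → x ∈ Pi i ∧ y ∈ Pi i ∧ x ≠ y ∧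
      act δ x (v.drop i) = act δ y (v.drop i) := by
    intro i
    by_cases hi : i < m
    · have hc : (img δ (Pi i) (v.drop i)).card < (Pi i).card := by
        rw [hPidef]
        simp only
        rw [← img_append', List.take_append_drop, hPi i hi]
        exact hvcomp
      have hninj : ¬ Set.InjOn (fun q => act δ q (v.drop i)) (Pi i) := by
        intro hinj
        rw [img, Finset.card_image_of_injOn hinj] at hc
        omega
      rw [Set.InjOn] at hninj
      push_neg at hninj
      obtain ⟨x, hxm, y, hym, hfeq, hne⟩ := hninj
      exact ⟨x, y, fun _ => ⟨hxm, hym, hne, hfeq⟩⟩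
    · exact ⟨q0, q0, fun h => absurd h hi⟩
  choose x y hxy using hkey
  have hcut : ∀ i j, i < j → j < m → x j ∉ Pi i ∨ y j ∉ Pi i := by
    intro i j hij hj
    by_contra hcon
    push_neg at hcon
    obtain ⟨hxin, hyin⟩ := hcon
    have hjm : j ≤ m := le_of_lt hj
    have hvm : v.length = m := hvlen
    have hlen : (v.take i ++ v.drop j).length < m := by
      rw [List.length_append, List.length_take, List.length_drop]
      omega
    apply hmin _ hlen
    rw [img_append']
    obtain ⟨_, _, hne, heq⟩ := hxy j hj
    calc (img δ (Pi i) (v.drop j)).card < (Pi i).card :=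
          img_card_lt_of_merge hxin hyin hne heq
      _ = P.card := hPi i (lt_trans hij hj)
  have hfrankl := frankl_pairs Pi x y
    (fun i hi => by rw [hPi i hi, hk])
    (fun i hi => (hxy i hi).1) (fun i hi => (hxy i hi).2.1) hcut
  omega
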